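/- The atomic Split rule is logically valid for the construction-based consequence relation: there is a construction k such that for every atomic base B, k is a construction of (p → q) ∨ (p → r) from {p → q ∨ r} on B; that is, p → q ∨ r ⊨c (p → q) ∨ (p → r). -/
import Mathlib


/-- Propositional atoms: `⊥` and countably many atoms `p n`. -/
inductive PAtom : Type
  | bot
  | p (n : ℕ)
deriving DecidableEq

/-- Formulas of the propositional language. -/
inductive Formula : Type
  | atom (a : PAtom)
  | and (A B : Formula)
  | or (A B : Formula)
  | imp (A B : Formula)
deriving DecidableEq

/-- Higher-level atomic rules: a rule has a list of premises, each of which may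
discharge a list of lower-level rules, and has an atomic conclusion.
A level-0 rule (axiom) is `mk [] a`. -/
inductive AtomicRule : Type
  | mk (prems : List (List AtomicRule × PAtom)) (concl : PAtom)

/-- The atomic explosion rules: from `⊥` infer any atom. -/
def AE : Set AtomicRule := { r | ∃ a, r = AtomicRule.mk [([], PAtom.bot)] a }

/-- An atomic base is a set of atomic rules containing atomic explosion. -/
def IsBase (B : Set AtomicRule) : Prop := AE ⊆ B

/-- Atomic derivability: `Der B Γ a` means the atom `a` is derivable from the assumed
atoms in `Γ` using the rules of `B` (rules discharged by an application of a
higher-level rule are temporarily added to the base). -/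
inductive Der : Set AtomicRule → Set PAtom → PAtom → Prop
  | assum {B : Set AtomicRule} {Γ : Set PAtom} {a : PAtom} : a ∈ Γ → Der B Γ a
  | app {B : Set AtomicRule} {Γ : Set PAtom} (prems : List (List AtomicRule × PAtom)) (a : PAtom) :
      AtomicRule.mk prems a ∈ B →
      (∀ pr ∈ prems, Der (B ∪ { r | r ∈ pr.1 }) Γ pr.2) →
      Der B Γ a

/-- The miB-eS forcing relation `⊩_B A` (consequence with empty antecedent):
atoms by atomic derivability, `∧` by both conjuncts, `∨` by one disjunct,
`→` by consequence over all extensions of the base. -/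
def Force : Set AtomicRule → Formula → Prop
  | B, .atom a => Der B ∅ a
  | B, .and A C => Force B A ∧ Force B C
  | B, .or A C => Force B A ∨ Force B C
  | B, .imp A C => ∀ X : Set AtomicRule, B ⊆ X → Force X A → Force X C

/-- The miB-eS consequence relation `Γ ⊩_B A`. -/
def Cons (B : Set AtomicRule) (Γ : Finset Formula) (A : Formula) : Prop :=
  if Γ = ∅ then Force B A
  else ∀ X : Set AtomicRule, B ⊆ X → (∀ G ∈ Γ, Force X G) → Force X A

/-- Prawitz-1971-style constructions of a formula on an atomic base:
a construction of an atom is (a witness of) an atomic derivation of it in the base;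
a construction of a conjunction is a pair of constructions; a construction of a
disjunction is a tagged construction of one disjunct; a construction of an
implication `A → C` on `B` maps, for every extension `X ⊇ B`, constructions of `A`
on `X` to constructions of `C` on `X`. -/
def Constr : Formula → Set AtomicRule → Type
  | .atom a, B => PLift (Der B ∅ a)
  | .and A C, B => Constr A B × Constr C B
  | .or A C, B => Constr A B ⊕ Constr C B
  | .imp A C, B => ∀ X : Set AtomicRule, B ⊆ X → Constr A X → Constr C X

lemma der_mono {B : Set AtomicRule} {Γ : Set PAtom} {a : PAtom}
    (h : Der B Γ a) : ∀ C : Set AtomicRule, B ⊆ C → Der C Γ a := by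
  induction h with
  | assum h => exact fun C _ => Der.assum h
  | app prems a hmem hprem ih =>
    intro C hBC
    exact Der.app prems a (hBC hmem)
      (fun pr hpr => ih pr hpr _ (Set.union_subset_union_left _ hBC))

lemma der_subst {p : PAtom} {D : Set AtomicRule} {Γ : Set PAtom} {a : PAtom}
    (h : Der D Γ a) :
    ∀ C : Set AtomicRule, Der C Γ p →
      (∀ r ∈ D, r = AtomicRule.mk [] p ∨ r ∈ C) → Der C Γ a := by
  induction h with
  | assum h => exact fun C _ _ => Der.assum h
  | app prems a hmem hprem ih =>
    intro C hp hsub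
    rcases hsub _ hmem with heq | hC
    · injection heq with h1 h2
      subst h1; subst h2
      exact hp
    · refine Der.app prems a hC (fun pr hpr => ?_)
      refine ih pr hpr (C ∪ {r | r ∈ pr.1})
        (der_mono hp _ Set.subset_union_left) ?_
      rintro r (hr | hr)
      · rcases hsub r hr with h | h
        · exact Or.inl h
        · exact Or.inr (Set.mem_union_left _ h)
      · exact Or.inr (Set.mem_union_right _ hr)

/-- the atomic Split rule is logically valid for construction-based
consequence: there is a single construction `k` such that for every atomic base `B`
and every extension `X ⊇ B`, `k` maps constructions of `p → q ∨ r` on `X` to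
constructions of `(p → q) ∨ (p → r)` on `X`; i.e. `p → q ∨ r ⊨c (p → q) ∨ (p → r)`. -/
theorem atomic_split_construction_valid (np nq nr : ℕ)
    (hpq : np ≠ nq) (hpr : np ≠ nr) (hqr : nq ≠ nr) :
    Nonempty (∀ B : Set AtomicRule, IsBase B → ∀ X : Set AtomicRule, B ⊆ X →
      Constr ((Formula.atom (PAtom.p np)).imp
        ((Formula.atom (PAtom.p nq)).or (Formula.atom (PAtom.p nr)))) X →
      Constr (((Formula.atom (PAtom.p np)).imp (Formula.atom (PAtom.p nq))).or
        ((Formula.atom (PAtom.p np)).imp (Formula.atom (PAtom.p nr)))) X) := by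
  constructor
  intro B _ X hBX f
  set Y : Set AtomicRule := X ∪ {AtomicRule.mk [] (PAtom.p np)} with hY
  have hXY : X ⊆ Y := Set.subset_union_left
  have hp : Der Y ∅ (PAtom.p np) :=
    Der.app [] _ (Set.mem_union_right _ rfl) (by simp)
  have hsub : ∀ Z : Set AtomicRule, X ⊆ Z →
      ∀ r ∈ Y, r = AtomicRule.mk [] (PAtom.p np) ∨ r ∈ Z := by
    rintro Z hXZ r (hr | hr)
    · exact Or.inr (hXZ hr)
    · exact Or.inl hr
  cases f Y hXY (PLift.up hp) with
  | inl cq =>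
    exact Sum.inl (fun Z hXZ cp =>
      PLift.up (der_subst cq.down Z cp.down (hsub Z hXZ)))
  | inr cr =>
    exact Sum.inr (fun Z hXZ cp =>
      PLift.up (der_subst cr.down Z cp.down (hsub Z hXZ)))
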